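/- arXiv:2004.08813 — 2 statements merged into one kernel-verified Lean document; each statement's English description precedes it below -/
import Mathlib

section
/- Birman–Schwinger principle, direction (ii): Let k ∈ T^d, z < E_min(k), and μ > 0. If ψ ∈ ℓ²(ℤ^d) satisfies ψ = B_μ(k,z) ψ, then f := R̂_0(k,z) |V|^{1/2} ψ ∈ ℓ²(ℤ^d) satisfies H_μ(k) f = z f. -/
open MeasureTheory Complex Filter
open scoped InnerProductSpace

noncomputable section

instance : Fact (0 < 2 * Real.pi) := ⟨by positivity⟩

/-- The `d`-dimensional torus `T^d = (ℝ/2πℤ)^d`. -/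
abbrev Torus (d : ℕ) := Fin d → AddCircle (2 * Real.pi)

/-- The lattice `ℤ^d`. -/
abbrev ZLat (d : ℕ) := Fin d → ℤ

/-- The normalized Haar measure `η` on the torus. -/
def haarT (d : ℕ) : Measure (Torus d) :=
  (ENNReal.ofReal ((2 * Real.pi) ^ d))⁻¹ • volume

/-- The character `p ↦ e^{i⟨p,x⟩}` on the torus. -/
def chr {d : ℕ} (x : ZLat d) (p : Torus d) : ℂ :=
  ∏ j, ((AddCircle.toCircle ((x j) • (p j)) : Circle) : ℂ)

end

/-! With `f := R₀ W ψ`, the right-inverse property gives `(H₀ - z) f = W ψ`, while the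
fixed-point equation gives `μ W² f = W ψ`; since `μ V = -μ W²` the two cancel in
`(H₀ + μ V - z) f`. -/

namespace ContinuousLinearMap

variable {R M : Type*} [CommRing R] [TopologicalSpace M] [AddCommGroup M] [Module R M]
  [IsTopologicalAddGroup M] [ContinuousConstSMul R M]

theorem apply_rightInverse_sub_smul {H₀ R₀ : M →L[R] M} {z : R}
    (hR₀ : (H₀ - z • 1) ∘L R₀ = 1) (x : M) : H₀ (R₀ x) = x + z • R₀ x :=
  sub_eq_iff_eq_add.mp (DFunLike.congr_fun hR₀ x)

theorem apply_eq_smul_of_birmanSchwinger_fixedPoint {H₀ V W R₀ : M →L[R] M} {μ z : R}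
    (hV : V = -(W ∘L W)) (hR₀ : (H₀ - z • 1) ∘L R₀ = 1) {ψ : M}
    (hψ : ψ = (μ • (W ∘L R₀ ∘L W)) ψ) :
    (H₀ + μ • V) ((R₀ ∘L W) ψ) = z • ((R₀ ∘L W) ψ) := by
  have hWψ : μ • W (W (R₀ (W ψ))) = W ψ := by
    conv_rhs => rw [hψ]
    simp only [smul_apply, comp_apply, map_smul]
  simp only [hV, add_apply, smul_apply, neg_apply, comp_apply, smul_neg, hWψ,
    apply_rightInverse_sub_smul hR₀]
  abel

end ContinuousLinearMap

theorem stmt_3_general (d : ℕ) (μ z : ℝ)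
    (H0 V W R0 : lp (fun _ : ZLat d => ℂ) 2 →L[ℂ] lp (fun _ : ZLat d => ℂ) 2)
    (hV : V = -(W ∘L W))
    (hR0' : (H0 - (z : ℂ) • 1) ∘L R0 = 1)
    (ψ : lp (fun _ : ZLat d => ℂ) 2)
    (hψ : ψ = ((μ : ℂ) • (W ∘L R0 ∘L W)) ψ) :
    (H0 + (μ : ℂ) • V) ((R0 ∘L W) ψ) = (z : ℂ) • ((R0 ∘L W) ψ) :=
  ContinuousLinearMap.apply_eq_smul_of_birmanSchwinger_fixedPoint hV hR0' hψ

/-- Birman–Schwinger principle, direction (ii).  If `ψ ∈ ℓ²(ℤ^d)` satisfies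
`ψ = B_μ(k,z) ψ` with `z < E_min(k)`, then `f := R̂₀(k,z)|V|^{1/2} ψ` satisfies
`H_μ(k) f = z f`.  Here `W = |V|^{1/2}` (so `V = -W²`) and `R̂₀(k,z) = (H₀(k) - z)⁻¹`. -/
theorem stmt_3 (d : ℕ) (μ z : ℝ) (hμ : 0 < μ)
    (E : Torus d → ℝ) (hE : Continuous E) (Emin : ℝ)
    (hmin : IsLeast (Set.range E) Emin) (hz : z < Emin)
    (H0 V W R0 : lp (fun _ : ZLat d => ℂ) 2 →L[ℂ] lp (fun _ : ZLat d => ℂ) 2)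
    (hWsa : IsSelfAdjoint W) (hV : V = -(W ∘L W))
    (hR0 : R0 ∘L (H0 - (z : ℂ) • 1) = 1) (hR0' : (H0 - (z : ℂ) • 1) ∘L R0 = 1)
    (ψ : lp (fun _ : ZLat d => ℂ) 2)
    (hψ : ψ = ((μ : ℂ) • (W ∘L R0 ∘L W)) ψ) :
    (H0 + (μ : ℂ) • V) ((R0 ∘L W) ψ) = (z : ℂ) • ((R0 ∘L W) ψ) :=
  stmt_3_general d μ z H0 V W R0 hV hR0' ψ hψ
end

section
/- Birman–Schwinger principle, multiplicity: Let k ∈ T^d, z < E_min(k), μ > 0. The number z is an eigenvalue of H_μ(k) of multiplicity m if and only if 1 is an eigenvalue of B_μ(k,z) of multiplicity m. Equivalently, the eigenspace ker(H_μ(k) - z) and ker(B_μ(k,z) - 1) have the same (finite) dimension. -/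
open MeasureTheory Complex Filter
open scoped InnerProductSpace

noncomputable section

/-! Since `H₀ - z` is invertible with inverse `R₀`, `(H_μ - z) x = 0` iff `x = μ R₀ W W x`.
The kernels of `1 - A B` and `1 - B A` are isomorphic via `B` (inverse `A`); with `A = R₀ W`
and `B = μ W` this identifies the eigenspace of `H_μ` at `z` with that of `μ W R₀ W` at `1`. -/

namespace LinearMap

variable {R M N : Type*} [Ring R] [AddCommGroup M] [Module R M] [AddCommGroup N] [Module R N]

theorem mem_ker_id_sub_iff {f : M →ₗ[R] M} {x : M} : x ∈ ker (id - f) ↔ f x = x := by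
  rw [mem_ker, sub_apply, id_apply, sub_eq_zero, eq_comm]

def kerIdSubCompEquiv (f : M →ₗ[R] N) (g : N →ₗ[R] M) :
    ker (id - g ∘ₗ f) ≃ₗ[R] ker (id - f ∘ₗ g) where
  toFun x := ⟨f x, mem_ker_id_sub_iff.2 <| congrArg f (mem_ker_id_sub_iff.1 x.2)⟩
  invFun y := ⟨g y, mem_ker_id_sub_iff.2 <| congrArg g (mem_ker_id_sub_iff.1 y.2)⟩
  map_add' x y := by ext; simp
  map_smul' c x := by ext; simp
  left_inv x := Subtype.ext (mem_ker_id_sub_iff.1 x.2)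
  right_inv y := Subtype.ext (mem_ker_id_sub_iff.1 y.2)

theorem ker_sub_eq_ker_id_sub_comp {T S : M →ₗ[R] M} (hST : S ∘ₗ T = id) (hTS : T ∘ₗ S = id)
    (K : M →ₗ[R] M) : ker (T - K) = ker (id - S ∘ₗ K) := by
  ext x
  rw [mem_ker_id_sub_iff, mem_ker, sub_apply, sub_eq_zero]
  constructor
  · intro h
    rw [comp_apply, ← h, ← comp_apply, hST, id_apply]
  · intro h
    nth_rw 1 [← h]
    rw [comp_apply, ← comp_apply T, hTS, id_apply]

def birmanSchwingerEquiv {T S : M →ₗ[R] M} (hST : S ∘ₗ T = id) (hTS : T ∘ₗ S = id)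
    (U : M →ₗ[R] N) (U' : N →ₗ[R] M) :
    ker (T - U' ∘ₗ U) ≃ₗ[R] ker (id - U ∘ₗ S ∘ₗ U') :=
  (LinearEquiv.ofEq _ _ (by rw [ker_sub_eq_ker_id_sub_comp hST hTS, comp_assoc])).trans
    (kerIdSubCompEquiv U (S ∘ₗ U'))

end LinearMap

theorem stmt_4_general (d : ℕ) (μ z : ℝ)
    (H0 V W R0 : lp (fun _ : ZLat d => ℂ) 2 →L[ℂ] lp (fun _ : ZLat d => ℂ) 2)
    (hV : V = -(W ∘L W))
    (hR0 : R0 ∘L (H0 - (z : ℂ) • 1) = 1) (hR0' : (H0 - (z : ℂ) • 1) ∘L R0 = 1) :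
    Module.rank ℂ (LinearMap.ker (((H0 + (μ : ℂ) • V) - (z : ℂ) • 1 : lp (fun _ : ZLat d => ℂ) 2 →L[ℂ] lp (fun _ : ZLat d => ℂ) 2) : lp (fun _ : ZLat d => ℂ) 2 →ₗ[ℂ] lp (fun _ : ZLat d => ℂ) 2)) =
      Module.rank ℂ (LinearMap.ker ((((μ : ℂ) • (W ∘L R0 ∘L W)) - 1 : lp (fun _ : ZLat d => ℂ) 2 →L[ℂ] lp (fun _ : ZLat d => ℂ) 2) : lp (fun _ : ZLat d => ℂ) 2 →ₗ[ℂ] lp (fun _ : ZLat d => ℂ) 2)) := by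
  set X := lp (fun _ : ZLat d => ℂ) 2
  set T : X →L[ℂ] X := H0 - (z : ℂ) • 1
  have hST : (R0 : X →ₗ[ℂ] X) ∘ₗ (T : X →ₗ[ℂ] X) = LinearMap.id :=
    LinearMap.ext fun x => congr($hR0 x)
  have hTS : (T : X →ₗ[ℂ] X) ∘ₗ (R0 : X →ₗ[ℂ] X) = LinearMap.id :=
    LinearMap.ext fun x => congr($hR0' x)
  have hH : ((H0 + (μ : ℂ) • V - (z : ℂ) • 1 : X →L[ℂ] X) : X →ₗ[ℂ] X)
      = (T : X →ₗ[ℂ] X) - (W : X →ₗ[ℂ] X) ∘ₗ (((μ : ℂ) • W : X →L[ℂ] X) : X →ₗ[ℂ] X) := by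
    refine LinearMap.ext fun x => ?_
    simp only [T, hV, ContinuousLinearMap.coe_coe, LinearMap.sub_apply, LinearMap.comp_apply,
      sub_apply, add_apply, smul_apply, neg_apply, one_apply_eq_self,
      ContinuousLinearMap.comp_apply, map_smul]
    module
  have hB : ((((μ : ℂ) • (W ∘L R0 ∘L W)) - 1 : X →L[ℂ] X) : X →ₗ[ℂ] X)
      = -(LinearMap.id -
          (((μ : ℂ) • W : X →L[ℂ] X) : X →ₗ[ℂ] X) ∘ₗ (R0 : X →ₗ[ℂ] X) ∘ₗ (W : X →ₗ[ℂ] X)) := by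
    refine LinearMap.ext fun x => ?_
    simp only [ContinuousLinearMap.coe_coe, sub_apply, smul_apply, LinearMap.neg_apply,
      LinearMap.sub_apply, one_apply_eq_self, ContinuousLinearMap.comp_apply, LinearMap.id_apply,
      LinearMap.comp_apply]
    abel
  rw [hH, hB, LinearMap.ker_neg]
  exact (LinearMap.birmanSchwingerEquiv hST hTS _ _).rank_eq

/-- Birman–Schwinger principle, multiplicities.  For `z < E_min(k)`,
the eigenspace `ker(H_μ(k) - z)` and the eigenspace `ker(B_μ(k,z) - 1)` have the same
dimension; in particular `z` is an eigenvalue of `H_μ(k)` of multiplicity `m` iff `1` is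
an eigenvalue of `B_μ(k,z)` of multiplicity `m`.  Here `W = |V|^{1/2}` (so `V = -W²`),
`R̂₀(k,z) = (H₀(k)-z)⁻¹`, and `B_μ(k,z) = μ W R̂₀(k,z) W` is compact. -/
theorem stmt_4 (d : ℕ) (μ z : ℝ) (hμ : 0 < μ)
    (E : Torus d → ℝ) (hE : Continuous E) (Emin : ℝ)
    (hmin : IsLeast (Set.range E) Emin) (hz : z < Emin)
    (H0 V W R0 : lp (fun _ : ZLat d => ℂ) 2 →L[ℂ] lp (fun _ : ZLat d => ℂ) 2)
    (hWsa : IsSelfAdjoint W) (hV : V = -(W ∘L W))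
    (hR0 : R0 ∘L (H0 - (z : ℂ) • 1) = 1) (hR0' : (H0 - (z : ℂ) • 1) ∘L R0 = 1)
    (hcpt : IsCompactOperator ((μ : ℂ) • (W ∘L R0 ∘L W))) :
    Module.rank ℂ (LinearMap.ker (((H0 + (μ : ℂ) • V) - (z : ℂ) • 1 : lp (fun _ : ZLat d => ℂ) 2 →L[ℂ] lp (fun _ : ZLat d => ℂ) 2) : lp (fun _ : ZLat d => ℂ) 2 →ₗ[ℂ] lp (fun _ : ZLat d => ℂ) 2)) =
      Module.rank ℂ (LinearMap.ker ((((μ : ℂ) • (W ∘L R0 ∘L W)) - 1 : lp (fun _ : ZLat d => ℂ) 2 →L[ℂ] lp (fun _ : ZLat d => ℂ) 2) : lp (fun _ : ZLat d => ℂ) 2 →ₗ[ℂ] lp (fun _ : ZLat d => ℂ) 2)) :=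
  stmt_4_general d μ z H0 V W R0 hV hR0 hR0'
end
end
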